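/- arXiv:1010.5285 — 3 statements merged into one kernel-verified Lean document; each statement's English description precedes it below -/
import Mathlib

section
/- For all natural numbers n ≥ 1 and k ≥ 0, the quantity n·[n²·C(n+k-1, n-1) − C(n+k+1, n-1)] is a nonnegative integer and is a polynomial in k of degree n-1 with leading coefficient n(n²-1)/(n-1)! when n ≥ 2. -/
open Polynomial Finset

lemma prod_eq_fact_mul_choose (m d : ℕ) :
    ∏ i ∈ Finset.range d, (m + 1 + i) = Nat.factorial d * (m + d).choose d := by
  rw [← Nat.ascFactorial_eq_factorial_mul_choose]
  induction d with
  | zero => simp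
  | succ d ih =>
      rw [Finset.prod_range_succ, ih, Nat.ascFactorial_succ]
      ring

lemma key_ineq (j k : ℕ) :
    (j + k + 2).choose j ≤ (j + 1) ^ 2 * (j + k).choose j := by
  have h1 := Nat.choose_mul_succ_eq (j + k) j
  have h2 := Nat.choose_mul_succ_eq (j + k + 1) j
  rw [show j + k + 1 - j = k + 1 by omega] at h1
  rw [show j + k + 1 + 1 - j = k + 2 by omega] at h2
  have key : (j + k + 2).choose j * ((k + 1) * (k + 2)) =
      (j + k).choose j * ((j + k + 1) * (j + k + 2)) := by
    calc (j + k + 2).choose j * ((k + 1) * (k + 2))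
        = ((j + k + 2).choose j * (k + 2)) * (k + 1) := by ring
      _ = ((j + k + 1).choose j * (j + k + 1 + 1)) * (k + 1) := by rw [← h2]
      _ = ((j + k + 1).choose j * (k + 1)) * (j + k + 2) := by ring
      _ = ((j + k).choose j * (j + k + 1)) * (j + k + 2) := by rw [← h1]
      _ = (j + k).choose j * ((j + k + 1) * (j + k + 2)) := by ring
  have hb : (j + k + 1) * (j + k + 2) ≤ (j + 1) ^ 2 * ((k + 1) * (k + 2)) := by
    nlinarith [Nat.zero_le (j * k)]
  have hle : (j + k + 2).choose j * ((k + 1) * (k + 2)) ≤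
      ((j + 1) ^ 2 * (j + k).choose j) * ((k + 1) * (k + 2)) := by
    rw [key]
    calc (j + k).choose j * ((j + k + 1) * (j + k + 2))
        ≤ (j + k).choose j * ((j + 1) ^ 2 * ((k + 1) * (k + 2))) :=
          Nat.mul_le_mul_left _ hb
      _ = ((j + 1) ^ 2 * (j + k).choose j) * ((k + 1) * (k + 2)) := by ring
  exact Nat.le_of_mul_le_mul_right hle (by positivity)

/-- for n ≥ 1 and k ≥ 0, the quantity
    n·[n²·C(n+k-1, n-1) − C(n+k+1, n-1)] is a nonnegative integer, and for
    n ≥ 2 it is, as a function of k, a polynomial of degree n-1 with leading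
    coefficient n(n²-1)/(n-1)!. -/
theorem stmt_4 (n : ℕ) (hn : 1 ≤ n) :
    (∀ k : ℕ, 0 ≤ (n : ℤ) * ((n : ℤ) ^ 2 * Nat.choose (n + k - 1) (n - 1) -
        Nat.choose (n + k + 1) (n - 1))) ∧
    (2 ≤ n → ∃ P : Polynomial ℚ,
      P.natDegree = n - 1 ∧
      P.leadingCoeff = (n : ℚ) * ((n : ℚ) ^ 2 - 1) / (Nat.factorial (n - 1)) ∧
      ∀ k : ℕ, P.eval (k : ℚ) =
        (n : ℚ) * ((n : ℚ) ^ 2 * Nat.choose (n + k - 1) (n - 1) -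
          Nat.choose (n + k + 1) (n - 1))) := by
  constructor
  · intro k
    obtain ⟨j, rfl⟩ : ∃ j, n = j + 1 := ⟨n - 1, by omega⟩
    have e1 : j + 1 + k - 1 = j + k := by omega
    have e2 : j + 1 + k + 1 = j + k + 2 := by omega
    have e3 : j + 1 - 1 = j := by omega
    rw [e1, e2, e3]
    have h := key_ineq j k
    have h' : ((j + k + 2).choose j : ℤ) ≤ ((j + 1 : ℕ) : ℤ) ^ 2 * (j + k).choose j := by
      exact_mod_cast h
    have hnn : (0 : ℤ) ≤ ((j + 1 : ℕ) : ℤ) ^ 2 * (j + k).choose j - (j + k + 2).choose j := by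
      omega
    exact mul_nonneg (by positivity) hnn
  · intro h2
    obtain ⟨j, rfl⟩ : ∃ j, n = j + 2 := ⟨n - 2, by omega⟩
    set d := j + 1 with hd
    set nq : ℚ := ((j + 2 : ℕ) : ℚ) with hnq
    have hnq' : nq = (j : ℚ) + 2 := by push_cast [hnq]; ring
    set M1 : ℚ[X] := ∏ i ∈ Finset.range d, (X + C ((i : ℚ) + 1)) with hM1
    set M2 : ℚ[X] := ∏ i ∈ Finset.range d, (X + C ((i : ℚ) + 3)) with hM2
    have hM1monic : M1.Monic := monic_prod_of_monic _ _ fun i _ => monic_X_add_C _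
    have hM2monic : M2.Monic := monic_prod_of_monic _ _ fun i _ => monic_X_add_C _
    have hM1deg : M1.natDegree = d := by
      rw [hM1, natDegree_prod_of_monic _ _ fun i _ => monic_X_add_C _]
      simp only [natDegree_X_add_C, Finset.sum_const, smul_eq_mul, mul_one, Finset.card_range]
    have hM2deg : M2.natDegree = d := by
      rw [hM2, natDegree_prod_of_monic _ _ fun i _ => monic_X_add_C _]
      simp only [natDegree_X_add_C, Finset.sum_const, smul_eq_mul, mul_one, Finset.card_range]
    set Q : ℚ[X] := C (nq ^ 2) * M1 - M2 with hQ
    have hcoefQ : Q.coeff d = nq ^ 2 - 1 := by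
      rw [hQ, coeff_sub, coeff_C_mul]
      have c1 : M1.coeff d = 1 := by
        rw [← hM1deg]; exact hM1monic.coeff_natDegree
      have c2 : M2.coeff d = 1 := by
        rw [← hM2deg]; exact hM2monic.coeff_natDegree
      rw [c1, c2]; ring
    have hne : nq ^ 2 - 1 ≠ 0 := by
      rw [hnq']; nlinarith [Nat.cast_nonneg (α := ℚ) j]
    have hQdegle : Q.natDegree ≤ d := by
      apply le_trans (natDegree_sub_le _ _)
      simp only [max_le_iff]
      exact ⟨le_trans (natDegree_C_mul_le _ _) hM1deg.le, hM2deg.le⟩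
    have hQdeg : Q.natDegree = d :=
      le_antisymm hQdegle (le_natDegree_of_ne_zero (by rw [hcoefQ]; exact hne))
    have hQlead : Q.leadingCoeff = nq ^ 2 - 1 := by
      rw [leadingCoeff, hQdeg, hcoefQ]
    have hcne : (nq / (Nat.factorial d : ℚ)) ≠ 0 := by
      apply div_ne_zero
      · rw [hnq']; positivity
      · exact_mod_cast (Nat.factorial_pos d).ne'
    refine ⟨C (nq / (Nat.factorial d : ℚ)) * Q, ?_, ?_, ?_⟩
    · rw [natDegree_C_mul hcne, hQdeg]
      omega
    · rw [leadingCoeff_mul, leadingCoeff_C, hQlead]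
      have e : j + 2 - 1 = d := by omega
      rw [e, hnq]
      field_simp
    · intro k
      have e1 : j + 2 + k - 1 = j + k + 1 := by omega
      have e2 : j + 2 + k + 1 = j + k + 3 := by omega
      have e3 : j + 2 - 1 = d := by omega
      rw [e1, e2, e3]
      have ev1 : M1.eval (k : ℚ) = ((Nat.factorial d * (j + k + 1).choose d : ℕ) : ℚ) := by
        have hp := prod_eq_fact_mul_choose k d
        rw [show k + d = j + k + 1 by omega] at hp
        rw [← hp, hM1, eval_prod]
        push_cast
        apply Finset.prod_congr rfl
        intro i _
        simp only [eval_add, eval_X, eval_C]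
        ring
      have ev2 : M2.eval (k : ℚ) = ((Nat.factorial d * (j + k + 3).choose d : ℕ) : ℚ) := by
        have hp := prod_eq_fact_mul_choose (k + 2) d
        rw [show k + 2 + d = j + k + 3 by omega] at hp
        rw [← hp, hM2, eval_prod]
        push_cast
        apply Finset.prod_congr rfl
        intro i _
        simp only [eval_add, eval_X, eval_C]
        ring
      have hfact : ((Nat.factorial d : ℕ) : ℚ) ≠ 0 := by
        exact_mod_cast (Nat.factorial_pos d).ne'
      rw [eval_mul, eval_C, hQ, eval_sub, eval_mul, eval_C, ev1, ev2]
      push_cast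
      field_simp
end

section
/- If smooth functions Γ^i_{jk} : ℝⁿ → ℝ satisfy ∑_{j,k} Γ^i_{jk}(x) x^j x^k ≡ 0 near 0, then for every r ≥ 0 and all indices, the symmetrization over all choices of the ordered pair (j,k) from the multiset {j, k, α₁, …, α_r} of ∂_{α₁}⋯∂_{α_r} Γ^i_{jk}(0) vanishes. -/
lemma key1d (h : ℝ → ℝ) (hh : ContDiff ℝ (⊤ : ℕ∞) h) (k : ℕ) (t : ℝ) :
    iteratedDeriv k (fun s => s ^ 2 * h s) t
      = t ^ 2 * iteratedDeriv k h t + 2 * (k : ℝ) * t * iteratedDeriv (k - 1) h t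
        + (k : ℝ) * ((k : ℝ) - 1) * iteratedDeriv (k - 2) h t := by
  have hD : ∀ (j : ℕ) (t : ℝ), HasDerivAt (iteratedDeriv j h) (iteratedDeriv (j + 1) h t) t := by
    intro j t
    have hd := ((hh.differentiable_iteratedDeriv j (by exact_mod_cast ENat.coe_lt_top j)) t).hasDerivAt
    rwa [iteratedDeriv_succ]
  induction k generalizing t with
  | zero => simp [iteratedDeriv_zero]
  | succ k ih =>
    rw [iteratedDeriv_succ]
    have hcongr : deriv (iteratedDeriv k (fun s => s ^ 2 * h s)) t
        = deriv (fun u => u ^ 2 * iteratedDeriv k h u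
            + 2 * (k : ℝ) * u * iteratedDeriv (k - 1) h u
            + (k : ℝ) * ((k : ℝ) - 1) * iteratedDeriv (k - 2) h u) t := by
      congr 1
      funext u
      exact ih u
    rw [hcongr]
    have hsq : HasDerivAt (fun u : ℝ => u ^ 2) (2 * t) t := by
      simpa using hasDerivAt_pow 2 t
    have h1 : HasDerivAt (fun u => u ^ 2 * iteratedDeriv k h u)
        (2 * t * iteratedDeriv k h t + t ^ 2 * iteratedDeriv (k + 1) h t) t :=
      hsq.mul (hD k t)
    have h2 : HasDerivAt (fun u => 2 * (k : ℝ) * u * iteratedDeriv (k - 1) h u)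
        (2 * (k : ℝ) * iteratedDeriv (k - 1) h t
          + 2 * (k : ℝ) * t * iteratedDeriv (k - 1 + 1) h t) t := by
      have := (((hasDerivAt_id t).const_mul (2 * (k : ℝ))).mul (hD (k - 1) t))
      have e : (fun u => 2 * (k : ℝ) * u * iteratedDeriv (k - 1) h u)
          = (fun y => 2 * (k : ℝ) * id y) * iteratedDeriv (k - 1) h := by
        funext u; simp only [Pi.mul_apply, id_eq]
      rw [e]
      refine this.congr_deriv ?_
      simp only [id_eq]; ring
    have h3 : HasDerivAt (fun u => (k : ℝ) * ((k : ℝ) - 1) * iteratedDeriv (k - 2) h u)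
        ((k : ℝ) * ((k : ℝ) - 1) * iteratedDeriv (k - 2 + 1) h t) t :=
      (hD (k - 2) t).const_mul _
    refine (((h1.add h2).add h3).deriv).trans ?_
    match k with
    | 0 => norm_num; ring
    | 1 => norm_num; ring
    | (j + 2) =>
      have e1 : j + 2 - 1 + 1 = j + 2 := rfl
      have e2 : j + 2 - 2 + 1 = j + 1 := rfl
      have e3 : j + 2 + 1 - 1 = j + 2 := rfl
      have e4 : j + 2 + 1 - 2 = j + 1 := rfl
      rw [e1, e2, e3, e4]
      push_cast
      ring

lemma keyQ (n : ℕ) (Γ : (Fin n → ℝ) → Fin n → Fin n → Fin n → ℝ)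
    (hsmooth : ∀ i j k : Fin n, ContDiff ℝ (⊤ : ℕ∞) fun x => Γ x i j k)
    (hnorm : ∀ᶠ x in nhds (0 : Fin n → ℝ), ∀ i : Fin n,
      ∑ j : Fin n, ∑ k : Fin n, Γ x i j k * x j * x k = 0)
    (r : ℕ) (i : Fin n) (v : Fin n → ℝ) :
    ∑ p : Fin n × Fin n, v p.1 * v p.2 *
      iteratedFDeriv ℝ r (fun x => Γ x i p.1 p.2) 0 (fun _ : Fin r => v) = 0 := by
  classical
  set L : ℝ →L[ℝ] (Fin n → ℝ) := ContinuousLinearMap.toSpanSingleton ℝ v with hL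
  have hLapp : ∀ t : ℝ, L t = t • v := fun t => ContinuousLinearMap.toSpanSingleton_apply ℝ v t
  -- the scalar functions
  set h : ℝ → ℝ := fun t => ∑ p : Fin n × Fin n, v p.1 * v p.2 * Γ (t • v) i p.1 p.2 with hdef
  have hsm : ∀ p : Fin n × Fin n, ContDiff ℝ (⊤ : ℕ∞) fun t : ℝ => Γ (t • v) i p.1 p.2 := by
    intro p
    have : ContDiff ℝ (⊤ : ℕ∞) ((fun x => Γ x i p.1 p.2) ∘ L) := (hsmooth i p.1 p.2).comp L.contDiff
    rw [show (fun t : ℝ => Γ (t • v) i p.1 p.2) = (fun x => Γ x i p.1 p.2) ∘ L by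
      funext t; simp [Function.comp, hLapp]]
    exact this
  have hh : ContDiff ℝ (⊤ : ℕ∞) h := by
    apply ContDiff.sum
    intro p _
    exact contDiff_const.mul (hsm p)
  -- g := t ↦ F (t • v) vanishes near 0
  have hg0 : ∀ᶠ t in nhds (0 : ℝ), t ^ 2 * h t = 0 := by
    have hcont : Continuous fun t : ℝ => t • v := (continuous_id.smul continuous_const)
    have htend : Filter.Tendsto (fun t : ℝ => t • v) (nhds 0) (nhds (0 : Fin n → ℝ)) := by
      have := hcont.tendsto 0
      simpa using this
    filter_upwards [htend.eventually hnorm] with t ht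
    have := ht i
    have expand : t ^ 2 * h t
        = ∑ j : Fin n, ∑ k : Fin n, Γ (t • v) i j k * (t • v) j * (t • v) k := by
      simp only [hdef]
      rw [Fintype.sum_prod_type]
      rw [Finset.mul_sum]
      refine Finset.sum_congr rfl fun j _ => ?_
      rw [Finset.mul_sum]
      refine Finset.sum_congr rfl fun k _ => ?_
      simp [Pi.smul_apply, smul_eq_mul]
      ring
    rw [expand, this]
  -- hence the (r+2)-th derivative of g at 0 vanishes
  have hiter : iteratedDeriv (r + 2) (fun t : ℝ => t ^ 2 * h t) 0 = 0 := by
    have heq : (fun t : ℝ => t ^ 2 * h t) =ᶠ[nhdsWithin (0:ℝ) Set.univ] (fun _ => (0:ℝ)) := by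
      rw [nhdsWithin_univ]; exact hg0
    have h00 : (fun t : ℝ => t ^ 2 * h t) 0 = (fun _ : ℝ => (0:ℝ)) 0 := by simp
    have := heq.iteratedFDerivWithin_eq (𝕜 := ℝ) h00 (r + 2)
    rw [iteratedFDerivWithin_univ, iteratedFDerivWithin_univ] at this
    rw [iteratedDeriv_eq_iteratedFDeriv, this, iteratedFDeriv_zero_fun]
    simp
  -- apply key1d at 0
  have hr : iteratedDeriv r h 0 = 0 := by
    have := key1d h hh (r + 2) 0
    rw [hiter] at this
    have e2 : r + 2 - 2 = r := rfl
    rw [e2] at this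
    have hco : ((r : ℝ) + 2) * (((r : ℝ) + 2) - 1) ≠ 0 := by
      have hr1 : ((r : ℝ) + 2) - 1 = (r : ℝ) + 1 := by ring
      rw [hr1]; positivity
    have : ((r : ℝ) + 2) * (((r : ℝ) + 2) - 1) * iteratedDeriv r h 0 = 0 := by
      push_cast at this ⊢
      linarith [this]
    exact (mul_eq_zero.mp this.symm.symm).resolve_left hco
  -- linearity: iteratedDeriv of the sum
  have hlin : iteratedDeriv r h 0
      = ∑ p : Fin n × Fin n, v p.1 * v p.2 *
          iteratedDeriv r (fun t : ℝ => Γ (t • v) i p.1 p.2) 0 := by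
    rw [iteratedDeriv_eq_iteratedFDeriv]
    have hsum : iteratedFDeriv ℝ r (fun t : ℝ => ∑ p : Fin n × Fin n,
          v p.1 * v p.2 * Γ (t • v) i p.1 p.2)
        = ∑ p : Fin n × Fin n,
            iteratedFDeriv ℝ r (fun t => v p.1 * v p.2 * Γ (t • v) i p.1 p.2) := by
      apply iteratedFDeriv_sum
      intro p _
      exact (contDiff_const.mul (hsm p)).of_le (by exact_mod_cast le_top)
    rw [hdef, hsum]
    rw [Finset.sum_apply, ContinuousMultilinearMap.sum_apply]
    refine Finset.sum_congr rfl fun p _ => ?_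
    have hc : iteratedFDeriv ℝ r (fun t : ℝ => v p.1 * v p.2 * Γ (t • v) i p.1 p.2) (0:ℝ)
        = (v p.1 * v p.2) • iteratedFDeriv ℝ r (fun t : ℝ => Γ (t • v) i p.1 p.2) (0:ℝ) := by
      exact iteratedFDeriv_const_smul_apply' (R := ℝ) (a := v p.1 * v p.2) ((hsm p).contDiffAt.of_le (by exact_mod_cast le_top))
    rw [hc, iteratedDeriv_eq_iteratedFDeriv]
    simp [smul_eq_mul]
  -- chain rule: directional derivative
  have hchain : ∀ p : Fin n × Fin n, iteratedDeriv r (fun t : ℝ => Γ (t • v) i p.1 p.2) 0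
      = iteratedFDeriv ℝ r (fun x => Γ x i p.1 p.2) 0 (fun _ : Fin r => v) := by
    intro p
    rw [iteratedDeriv_eq_iteratedFDeriv]
    have hcomp : (fun t : ℝ => Γ (t • v) i p.1 p.2) = (fun x => Γ x i p.1 p.2) ∘ L := by
      funext t; simp [Function.comp, hLapp]
    rw [hcomp]
    rw [L.iteratedFDeriv_comp_right (hsmooth i p.1 p.2) 0 (by exact_mod_cast le_top)]
    rw [ContinuousMultilinearMap.compContinuousLinearMap_apply]
    have : L 0 = 0 := by simp [hLapp]
    rw [this]
    congr 1
    funext s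
    simp [hLapp]
  rw [hlin] at hr
  rw [← hr]
  refine Finset.sum_congr rfl fun p _ => ?_
  rw [hchain p]

lemma sum_fun_succ {β M : Type*} [Fintype β] [DecidableEq β] [AddCommMonoid M]
    (k : ℕ) (F : (Fin (k + 1) → β) → M) :
    ∑ g : Fin (k + 1) → β, F g = ∑ a : β, ∑ q : Fin k → β, F (Fin.cons a q) := by
  rw [← Equiv.sum_comp (Fin.consEquiv (fun _ : Fin (k + 1) => β)) F, Fintype.sum_prod_type]
  simp [Fin.consEquiv]

lemma sum_fun_succ2 {β M : Type*} [Fintype β] [DecidableEq β] [AddCommMonoid M]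
    (k : ℕ) (F : (Fin (k + 2) → β) → M) :
    ∑ g : Fin (k + 2) → β, F g
      = ∑ a : β, ∑ b : β, ∑ q : Fin k → β, F (Fin.cons a (Fin.cons b q)) := by
  rw [sum_fun_succ (k + 1) F]
  exact Finset.sum_congr rfl fun a _ => sum_fun_succ k (fun q => F (Fin.cons a q))

/-- if smooth Γ^i_{jk} on ℝⁿ satisfy ∑_{j,k} Γ^i_{jk}(x)x^jx^k ≡ 0
    near 0, then for every r ≥ 0 and indices m : Fin (r+2) → Fin n (listing
    j, k, α₁, …, α_r), the symmetrization over all ordered pairs of the r+2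
    indices of the r-th order derivative ∂_{α₁}⋯∂_{α_r} Γ^i_{jk}(0) vanishes.
    The sum over ordered pairs is expressed (equivalently, up to the factor r!
    coming from the symmetry of the iterated derivative in its directions) as a
    sum over all permutations σ of the r+2 index slots, the slots σ(0), σ(1)
    serving as the two lower Christoffel indices and the remaining r slots as
    derivative directions. -/
theorem stmt_15 (n : ℕ) (Γ : (Fin n → ℝ) → Fin n → Fin n → Fin n → ℝ)
    (hsmooth : ∀ i j k : Fin n, ContDiff ℝ (⊤ : ℕ∞) fun x => Γ x i j k)
    (hnorm : ∀ᶠ x in nhds (0 : Fin n → ℝ), ∀ i : Fin n,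
      ∑ j : Fin n, ∑ k : Fin n, Γ x i j k * x j * x k = 0) :
    ∀ (r : ℕ) (i : Fin n) (m : Fin (r + 2) → Fin n),
      ∑ σ : Equiv.Perm (Fin (r + 2)),
        iteratedFDeriv ℝ r (fun x => Γ x i (m (σ 0)) (m (σ 1))) 0
          (fun s : Fin r => Pi.single (m (σ s.succ.succ)) 1) = 0 := by
  classical
  intro r i m
  set D : (Fin (r + 2) → Fin (r + 2)) → ℝ := fun g =>
    iteratedFDeriv ℝ r (fun x => Γ x i (m (g 0)) (m (g 1))) 0
      (fun s : Fin r => Pi.single (m (g s.succ.succ)) 1) with hD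
  -- Step 1: the polynomial identity
  have hzero : ∀ t : Fin (r + 2) → ℝ,
      ∑ g : Fin (r + 2) → Fin (r + 2), (∏ c, t (g c)) * D g = 0 := by
    intro t
    set v : Fin n → ℝ :=
      ∑ a : Fin (r + 2), t a • (Pi.single (m a) (1:ℝ) : Fin n → ℝ) with hv
    have hQ := keyQ n Γ hsmooth hnorm r i v
    have hQ1 : ∑ j : Fin n, ∑ k : Fin n, v j * v k *
        iteratedFDeriv ℝ r (fun x => Γ x i j k) 0 (fun _ : Fin r => v) = 0 := by
      rw [← hQ, Fintype.sum_prod_type]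
    -- expand the multilinear slots
    have hT : ∀ j k : Fin n,
        iteratedFDeriv ℝ r (fun x => Γ x i j k) 0 (fun _ : Fin r => v)
          = ∑ q : Fin r → Fin (r + 2), (∏ s, t (q s)) *
              iteratedFDeriv ℝ r (fun x => Γ x i j k) 0
                (fun s : Fin r => Pi.single (m (q s)) 1) := by
      intro j k
      have h1 : (fun _ : Fin r => v)
          = fun s : Fin r => ∑ a : Fin (r + 2), t a • (Pi.single (m a) (1:ℝ) : Fin n → ℝ) := by
        funext s; rw [hv]
      have hms := (iteratedFDeriv ℝ r (fun x => Γ x i j k) 0).map_sum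
        (g := fun (_ : Fin r) (a : Fin (r + 2)) => t a • (Pi.single (m a) (1:ℝ) : Fin n → ℝ))
      rw [h1, hms]
      refine Finset.sum_congr rfl fun q _ => ?_
      have := (iteratedFDeriv ℝ r (fun x => Γ x i j k) 0).map_smul_univ
        (fun s : Fin r => t (q s)) (fun s : Fin r => (Pi.single (m (q s)) (1:ℝ) : Fin n → ℝ))
      rw [this, smul_eq_mul]
    -- contraction of one index
    have hcontract : ∀ A : Fin n → ℝ,
        ∑ j : Fin n, v j * A j = ∑ a : Fin (r + 2), t a * A (m a) := by
      intro A
      have hvj : ∀ j : Fin n,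
          v j = ∑ a : Fin (r + 2), t a * (Pi.single (m a) (1:ℝ) : Fin n → ℝ) j := by
        intro j; rw [hv]; rw [Finset.sum_apply]; rfl
      calc ∑ j : Fin n, v j * A j
          = ∑ j : Fin n, ∑ a : Fin (r + 2),
              t a * (Pi.single (m a) (1:ℝ) : Fin n → ℝ) j * A j := by
            refine Finset.sum_congr rfl fun j _ => ?_
            rw [hvj j, Finset.sum_mul]
        _ = ∑ a : Fin (r + 2), ∑ j : Fin n,
              t a * (Pi.single (m a) (1:ℝ) : Fin n → ℝ) j * A j := Finset.sum_comm
        _ = ∑ a : Fin (r + 2), t a * A (m a) := by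
            refine Finset.sum_congr rfl fun a _ => ?_
            simp [Pi.single_apply, ite_mul, mul_ite]
    have hQ2 : ∑ a : Fin (r + 2), ∑ b : Fin (r + 2), ∑ q : Fin r → Fin (r + 2),
        t a * t b * (∏ s, t (q s)) *
          iteratedFDeriv ℝ r (fun x => Γ x i (m a) (m b)) 0
            (fun s : Fin r => Pi.single (m (q s)) 1) = 0 := by
      calc ∑ a : Fin (r + 2), ∑ b : Fin (r + 2), ∑ q : Fin r → Fin (r + 2),
            t a * t b * (∏ s, t (q s)) *
              iteratedFDeriv ℝ r (fun x => Γ x i (m a) (m b)) 0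
                (fun s : Fin r => Pi.single (m (q s)) 1)
          = ∑ a : Fin (r + 2), t a * (∑ b : Fin (r + 2), t b *
              (∑ q : Fin r → Fin (r + 2), (∏ s, t (q s)) *
                iteratedFDeriv ℝ r (fun x => Γ x i (m a) (m b)) 0
                  (fun s : Fin r => Pi.single (m (q s)) 1))) := by
            refine Finset.sum_congr rfl fun a _ => ?_
            rw [Finset.mul_sum]
            refine Finset.sum_congr rfl fun b _ => ?_
            rw [Finset.mul_sum, Finset.mul_sum]
            refine Finset.sum_congr rfl fun q _ => ?_
            ring
        _ = ∑ a : Fin (r + 2), t a * (∑ b : Fin (r + 2), t b *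
              iteratedFDeriv ℝ r (fun x => Γ x i (m a) (m b)) 0 (fun _ : Fin r => v)) := by
            refine Finset.sum_congr rfl fun a _ => ?_
            congr 1
            refine Finset.sum_congr rfl fun b _ => ?_
            rw [← hT (m a) (m b)]
        _ = ∑ a : Fin (r + 2), t a * (∑ k : Fin n, v k *
              iteratedFDeriv ℝ r (fun x => Γ x i (m a) k) 0 (fun _ : Fin r => v)) := by
            refine Finset.sum_congr rfl fun a _ => ?_
            congr 1
            exact (hcontract fun k =>
              iteratedFDeriv ℝ r (fun x => Γ x i (m a) k) 0 (fun _ : Fin r => v)).symm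
        _ = ∑ j : Fin n, v j * (∑ k : Fin n, v k *
              iteratedFDeriv ℝ r (fun x => Γ x i j k) 0 (fun _ : Fin r => v)) := by
            exact (hcontract fun j => ∑ k : Fin n, v k *
              iteratedFDeriv ℝ r (fun x => Γ x i j k) 0 (fun _ : Fin r => v)).symm
        _ = ∑ j : Fin n, ∑ k : Fin n, v j * v k *
              iteratedFDeriv ℝ r (fun x => Γ x i j k) 0 (fun _ : Fin r => v) := by
            refine Finset.sum_congr rfl fun j _ => ?_
            rw [Finset.mul_sum]
            refine Finset.sum_congr rfl fun k _ => ?_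
            ring
        _ = 0 := hQ1
    -- reindex the triple sum as a sum over functions on Fin (r+2)
    rw [sum_fun_succ2 r (fun g => (∏ c, t (g c)) * D g)]
    rw [← hQ2]
    refine Finset.sum_congr rfl fun a _ => ?_
    refine Finset.sum_congr rfl fun b _ => ?_
    refine Finset.sum_congr rfl fun q _ => ?_
    set g' : Fin (r + 2) → Fin (r + 2) := Fin.cons a (Fin.cons b q) with hg'
    have e0 : g' 0 = a := rfl
    have e1 : g' 1 = b := by
      rw [hg', ← Fin.succ_zero_eq_one, Fin.cons_succ, Fin.cons_zero]
    have e2 : ∀ s : Fin r, g' s.succ.succ = q s := by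
      intro s; rw [hg', Fin.cons_succ, Fin.cons_succ]
    have hprod : (∏ c, t (g' c)) = t a * (t b * ∏ s, t (q s)) := by
      rw [Fin.prod_univ_succ, Fin.prod_univ_succ, e0,
        show g' ((0 : Fin (r + 1)).succ) = b from by rw [Fin.succ_zero_eq_one]; exact e1,
        show (∏ s : Fin r, t (g' s.succ.succ)) = ∏ s : Fin r, t (q s) from
          Finset.prod_congr rfl fun s _ => congrArg t (e2 s)]
    have hDval : D g'
        = iteratedFDeriv ℝ r (fun x => Γ x i (m a) (m b)) 0
            (fun s : Fin r => Pi.single (m (q s)) 1) := by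
      rw [hD]
      simp only [e0, e1, e2]
    rw [hprod, hDval]
    ring
  -- Step 2: polynomial coefficient extraction
  set P : MvPolynomial (Fin (r + 2)) ℝ :=
    ∑ g : Fin (r + 2) → Fin (r + 2), MvPolynomial.C (D g) * ∏ c, MvPolynomial.X (g c) with hP
  have hPzero : P = 0 := by
    apply MvPolynomial.funext
    intro t
    rw [hP, map_sum]
    simp only [map_mul, MvPolynomial.eval_C, map_prod, MvPolynomial.eval_X, map_zero]
    rw [← hzero t]
    exact Finset.sum_congr rfl fun g _ => mul_comm _ _
  set d : Fin (r + 2) →₀ ℕ := ∑ c : Fin (r + 2), Finsupp.single c 1 with hd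
  have hmono : ∀ g : Fin (r + 2) → Fin (r + 2),
      (∏ c, (MvPolynomial.X (g c) : MvPolynomial (Fin (r + 2)) ℝ))
        = MvPolynomial.monomial (∑ c : Fin (r + 2), Finsupp.single (g c) 1) 1 := by
    intro g
    have key : ∀ s : Finset (Fin (r + 2)),
        (∏ c ∈ s, (MvPolynomial.X (g c) : MvPolynomial (Fin (r + 2)) ℝ))
          = MvPolynomial.monomial (∑ c ∈ s, Finsupp.single (g c) 1) 1 := by
      intro s
      induction s using Finset.induction_on with
      | empty => simp
      | insert a s ha ih =>
        rw [Finset.prod_insert ha, Finset.sum_insert ha, ih, ← pow_one (MvPolynomial.X _),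
          MvPolynomial.X_pow_eq_monomial, MvPolynomial.monomial_mul, one_mul]
    exact key Finset.univ
  have hbij : ∀ g : Fin (r + 2) → Fin (r + 2),
      (∑ c : Fin (r + 2), Finsupp.single (g c) 1) = d ↔ Function.Bijective g := by
    intro g
    constructor
    · intro h
      refine Finite.surjective_iff_bijective.mp ?_
      intro c'
      have happ := DFunLike.congr_fun h c'
      rw [hd] at happ
      simp only [Finsupp.finset_sum_apply, Finsupp.single_apply] at happ
      by_contra hc
      push_neg at hc
      have hz : (∑ c : Fin (r + 2), if g c = c' then (1:ℕ) else 0) = 0 := by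
        refine Finset.sum_eq_zero fun c _ => ?_
        simp [hc c]
      have ho : (∑ c : Fin (r + 2), if c = c' then (1:ℕ) else 0) = 1 := by
        simp [Finset.sum_ite_eq']
      rw [hz, ho] at happ
      exact absurd happ (by norm_num)
    · intro hg
      rw [hd]
      exact hg.sum_comp (fun c => Finsupp.single c 1)
  have hcoeff : MvPolynomial.coeff d P
      = ∑ g : Fin (r + 2) → Fin (r + 2), if Function.Bijective g then D g else 0 := by
    rw [hP, MvPolynomial.coeff_sum]
    refine Finset.sum_congr rfl fun g _ => ?_
    rw [MvPolynomial.coeff_C_mul, hmono g, MvPolynomial.coeff_monomial]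
    by_cases hcase : (∑ c : Fin (r + 2), Finsupp.single (g c) 1) = d
    · rw [if_pos hcase, if_pos ((hbij g).mp hcase), mul_one]
    · rw [if_neg hcase, if_neg (fun hb => hcase ((hbij g).mpr hb)), mul_zero]
  have hfin : ∑ g : Fin (r + 2) → Fin (r + 2),
      (if Function.Bijective g then D g else 0) = 0 := by
    rw [← hcoeff, hPzero]
    simp
  -- Step 3: sum over permutations equals sum over bijective functions
  have hperm : ∑ σ : Equiv.Perm (Fin (r + 2)), D ⇑σ
      = ∑ g : Fin (r + 2) → Fin (r + 2), (if Function.Bijective g then D g else 0) := by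
    rw [Finset.sum_ite, Finset.sum_const_zero, add_zero]
    refine Finset.sum_bij (fun (σ : Equiv.Perm (Fin (r + 2))) _ => ⇑σ) ?_ ?_ ?_ ?_
    · intro σ _
      simp only [Finset.mem_filter, Finset.mem_univ, true_and]
      exact σ.bijective
    · intro σ₁ _ σ₂ _ h
      exact Equiv.coe_fn_injective h
    · intro g hg
      simp only [Finset.mem_filter, Finset.mem_univ, true_and] at hg
      exact ⟨Equiv.ofBijective g hg, Finset.mem_univ _, rfl⟩
    · intro σ _
      rfl
  exact hperm.trans hfin
end

section
/- For n ≥ 3, the Poincaré series p(t) = n²(n-3)/2 + ∑_{k≥1} n·[n²·C(n+k-1,n-1) − C(n+k+1,n-1)] t^k equals −n² + n·( (n²-1)/(1-t)^n − ∑_{j=2}^{n} j/(1-t)^{n-j+1} ) as formal power series (equivalently as rational functions on |t|<1). -/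
lemma hockey (n k : ℕ) : ∑ j ∈ Finset.range (n+1), Nat.choose (j+k) k = Nat.choose (n+k+1) (k+1) := by
  induction n with
  | zero => simp
  | succ n ih =>
    rw [Finset.sum_range_succ, ih, show n+1+k = n+k+1 from by omega,
      show n+k+1+1 = (n+k+1)+1 from rfl, Nat.choose_succ_succ (n+k+1) k]
    have : (n+k+1).choose (k+1) = (n+k+1).choose (Nat.succ k) := rfl
    omega

lemma key (n k : ℕ) :
    ∑ j ∈ Finset.range n, (j+1) * Nat.choose (n - 1 - j + k) k = Nat.choose (n + k + 1) (k + 2) := by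
  induction n with
  | zero => simp [Nat.choose_eq_zero_of_lt]
  | succ n ih =>
    have split : ∀ j ∈ Finset.range (n+1), (j+1) * Nat.choose (n + 1 - 1 - j + k) k
        = j * Nat.choose (n - j + k) k + Nat.choose (n - j + k) k := by
      intro j hj
      have : n + 1 - 1 - j = n - j := by omega
      rw [this]; ring
    rw [Finset.sum_congr rfl split, Finset.sum_add_distrib]
    have h1 : ∑ j ∈ Finset.range (n+1), j * Nat.choose (n - j + k) k
        = Nat.choose (n + k + 1) (k + 2) := by
      rw [Finset.sum_range_succ' (fun j => j * Nat.choose (n - j + k) k) n]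
      simp only [Nat.zero_mul, add_zero, zero_mul]
      rw [← ih]
      apply Finset.sum_congr rfl
      intro j hj
      simp only [Finset.mem_range] at hj
      congr 2
      omega
    have h2 : ∑ j ∈ Finset.range (n+1), Nat.choose (n - j + k) k
        = Nat.choose (n + k + 1) (k + 1) := by
      have e : ∑ j ∈ Finset.range (n+1), Nat.choose (n - j + k) k
          = ∑ j ∈ Finset.range (n+1), Nat.choose (j + k) k := by
        rw [← Finset.sum_range_reflect (fun j => Nat.choose (j+k) k) (n+1)]
        apply Finset.sum_congr rfl
        intro j hj
        simp only [Finset.mem_range] at hj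
        have h : n + 1 - 1 - j = n - j := by omega
        show Nat.choose (n - j + k) k = Nat.choose (n + 1 - 1 - j + k) k
        rw [h]
      rw [e, hockey]
    rw [h1, h2, show n+1+k+1 = (n+k+1)+1 from by omega, Nat.choose_succ_succ (n+k+1) (k+1)]
    have : (n+k+1).choose (k+2) = (n+k+1).choose (Nat.succ (k+1)) := rfl
    omega

lemma two_mul_choose_two (m : ℕ) : 2 * m.choose 2 = m * (m - 1) := by
  induction m with
  | zero => simp
  | succ m ih =>
    rw [Nat.choose_succ_succ m 1, Nat.mul_add, ih, Nat.choose_one_right]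
    cases m <;> simp <;> ring

lemma choose_symm_add (a k : ℕ) : (a + k).choose a = (a + k).choose k := by
  have h := Nat.choose_symm (Nat.le_add_left k a)
  rwa [Nat.add_sub_cancel] at h

lemma keyIcc (n k : ℕ) (hn : 1 ≤ n) :
    Nat.choose (n + k - 1) (n - 1)
      + ∑ j ∈ Finset.Icc 2 n, j * Nat.choose (n - j + 1 + k - 1) (n - j + 1 - 1)
      = Nat.choose (n + k + 1) (n - 1) := by
  have h1 : ∑ j ∈ Finset.Icc 1 n, j * Nat.choose (n - j + 1 + k - 1) (n - j + 1 - 1)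
      = Nat.choose (n + k + 1) (k + 2) := by
    rw [← key n k, ← Finset.Ico_add_one_right_eq_Icc, Finset.sum_Ico_eq_sum_range]
    apply Finset.sum_congr (by congr 1)
    intro j hj
    simp only [Finset.mem_range] at hj
    have e1 : n - (1 + j) + 1 + k - 1 = (n - 1 - j) + k := by omega
    have e2 : n - (1 + j) + 1 - 1 = n - 1 - j := by omega
    rw [e1, e2, add_comm 1 j, choose_symm_add (n - 1 - j) k]
  have h2 : ∑ j ∈ Finset.Icc 1 n, j * Nat.choose (n - j + 1 + k - 1) (n - j + 1 - 1)
      = 1 * Nat.choose (n - 1 + 1 + k - 1) (n - 1 + 1 - 1)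
        + ∑ j ∈ Finset.Icc 2 n, j * Nat.choose (n - j + 1 + k - 1) (n - j + 1 - 1) := by
    have hins : Finset.Icc 1 n = insert 1 (Finset.Icc 2 n) :=
      Finset.ext fun x => by simp only [Finset.mem_Icc, Finset.mem_insert]; omega
    rw [hins, Finset.sum_insert (by simp)]
  have e3 : n - 1 + 1 + k - 1 = n + k - 1 := by omega
  have e4 : n - 1 + 1 - 1 = n - 1 := by omega
  have e5 : Nat.choose (n + k + 1) (k + 2) = Nat.choose (n + k + 1) (n - 1) := by
    have h := Nat.choose_symm (n := n + k + 1) (k := k + 2) (by omega)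
    rw [show n + k + 1 - (k + 2) = n - 1 from by omega] at h
    omega
  rw [e3, e4, one_mul] at h2
  omega

/-- for n ≥ 3, the Poincaré series
    p(t) = n²(n-3)/2 + ∑_{k≥1} n·[n²·C(n+k-1,n-1) − C(n+k+1,n-1)] t^k
    equals −n² + n·( (n²-1)/(1-t)^n − ∑_{j=2}^{n} j/(1-t)^{n-j+1} ) in ℚ[[t]],
    where 1/(1-t)^m := ∑_{k≥0} C(m+k-1,m-1) t^k. -/
theorem stmt_18 (n : ℕ) (hn : 3 ≤ n) :
    (PowerSeries.mk fun k : ℕ =>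
        if k = 0 then (n : ℚ) ^ 2 * ((n : ℚ) - 3) / 2
        else (n : ℚ) * ((n : ℚ) ^ 2 * Nat.choose (n + k - 1) (n - 1) -
          Nat.choose (n + k + 1) (n - 1))) =
      -(n : PowerSeries ℚ) ^ 2 +
        (n : PowerSeries ℚ) *
          (((n : PowerSeries ℚ) ^ 2 - 1) *
              (PowerSeries.mk fun k : ℕ => (Nat.choose (n + k - 1) (n - 1) : ℚ)) -
            ∑ j ∈ Finset.Icc 2 n,
              (j : PowerSeries ℚ) *
                PowerSeries.mk fun k : ℕ =>
                  (Nat.choose (n - j + 1 + k - 1) (n - j + 1 - 1) : ℚ)) := by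
  have hcast : ∀ m : ℕ, (m : PowerSeries ℚ) = PowerSeries.C (m : ℚ) :=
    fun m => by exact_mod_cast rfl
  ext k
  simp only [hcast, PowerSeries.coeff_mk, map_add, map_neg, map_sub, map_sum,
    ← map_pow, sub_mul, one_mul, mul_sub, Finset.mul_sum, PowerSeries.coeff_C_mul,
    PowerSeries.coeff_C]
  rw [← Finset.mul_sum]
  have H := keyIcc n k (by omega)
  have Hq : ((Nat.choose (n + k - 1) (n - 1) : ℚ)
      + ∑ j ∈ Finset.Icc 2 n,
          (j : ℚ) * (Nat.choose (n - j + 1 + k - 1) (n - j + 1 - 1) : ℚ))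
      = (Nat.choose (n + k + 1) (n - 1) : ℚ) := by exact_mod_cast H
  by_cases hk : k = 0
  · subst hk
    have hc1 : ((Nat.choose (n - 1) (n - 1) : ℕ) : ℚ) = 1 := by
      rw [Nat.choose_self]; norm_num
    have hc2 : ((Nat.choose (n + 1) (n - 1) : ℕ) : ℚ) = n * (n + 1) / 2 := by
      have hs := Nat.choose_symm (n := n + 1) (k := 2) (by omega)
      rw [show n + 1 - 2 = n - 1 from by omega] at hs
      have h2 := two_mul_choose_two (n + 1)
      rw [show n + 1 - 1 = n from rfl] at h2
      rw [hs]
      have h3 : (2 : ℚ) * ((Nat.choose (n + 1) 2 : ℕ) : ℚ) = ((n : ℚ) + 1) * n := by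
        exact_mod_cast h2
      linarith
    simp only [add_zero] at Hq ⊢
    rw [hc1, hc2] at Hq
    simp only [if_true, hc1]
    linear_combination (n : ℚ) * Hq
  · simp only [if_neg hk, neg_zero]
    linear_combination (n : ℚ) * Hq
end
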